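/- For every edge price α > n−2, no stable (pure Nash equilibrium) network (G(s),α) of a network creation game with n ≥ 4 agents contains a cycle of length 4. -/

import Mathlib

open scoped BigOperators

namespace NCG

variable {V : Type*} [Fintype V] [DecidableEq V]

/-- The network induced by a strategy vector `st`: `{u,v}` is an edge iff (at least)
one of the endpoints buys it, i.e. `v ∈ st u` or `u ∈ st v`. -/
def graph (st : V → Finset V) : SimpleGraph V where
  Adj u v := u ≠ v ∧ (v ∈ st u ∨ u ∈ st v)
  symm := ⟨fun u v h => ⟨h.1.symm, h.2.symm⟩⟩
  loopless := ⟨fun u h => h.1 rfl⟩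

open scoped Classical in
/-- The distance cost of agent `u`: the sum of the graph distances to all nodes if the
network is connected, and `⊤` otherwise. -/
noncomputable def distcost (st : V → Finset V) (u : V) : EReal :=
  if (graph st).Connected then (((∑ w : V, ((graph st).dist u w : ℝ)) : ℝ) : EReal) else ⊤

/-- The cost of agent `u`: `α` per bought edge plus the distance cost. -/
noncomputable def cost (α : ℝ) (st : V → Finset V) (u : V) : EReal :=
  ((α * (st u).card : ℝ) : EReal) + distcost st u

/-- A network is stable (a pure Nash equilibrium) if no agent `u` can strictly
decrease her cost by unilaterally changing her own strategy set `st u`. -/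
def Stable (α : ℝ) (st : V → Finset V) : Prop :=
  ∀ u : V, ∀ t : Finset V, u ∉ t → cost α st u ≤ cost α (Function.update st u t) u

/-- The social cost of a network: the sum of the costs of all agents. -/
noncomputable def socialCost (α : ℝ) (st : V → Finset V) : EReal :=
  ∑ u : V, cost α st u

/-- The optimal (minimum) social cost over all strategy vectors on agent set `W`. -/
noncomputable def optCost (α : ℝ) (W : Type*) [Fintype W] [DecidableEq W] : EReal :=
  sInf {c : EReal | ∃ st : W → Finset W, (∀ u, u ∉ st u) ∧ c = socialCost α st}

/-- `T` is a shortest path tree of `G` rooted at `r`: a spanning tree of `G`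
preserving all distances from `r`. -/
def IsSPT (G : SimpleGraph V) (r : V) (T : SimpleGraph V) : Prop :=
  T ≤ G ∧ T.IsTree ∧ ∀ x, T.dist r x = G.dist r x

/-- The subgraph of `G` induced on `S` is biconnected: it has at least 3 vertices,
it is connected, and it has no cut vertex. -/
def IsBiconnectedOn (G : SimpleGraph V) (S : Set V) : Prop :=
  3 ≤ S.ncard ∧ (G.induce S).Connected ∧ ∀ x ∈ S, (G.induce (S \ {x})).Connected

/-- `S` induces a biconnected component of `G`: a maximal biconnected induced subgraph. -/
def IsBiconnectedComponent (G : SimpleGraph V) (S : Set V) : Prop :=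
  IsBiconnectedOn G S ∧ ∀ S' : Set V, S ⊆ S' → IsBiconnectedOn G S' → S' = S

/-- `⟨v,u⟩` is a critical pair (with witnesses `v₁, v₂, u'` and biconnected component `H`)
of the network induced by the strategy vector `st`:
(1) `v ∈ H` buys the two distinct non-bridge edges `(v,v₁)` and `(v,v₂)` with `v₁,v₂ ∈ H`;
(2) `u ∈ H`, `u ≠ v`, buys an edge `(u,u')` with `u' ∈ H`, `u' ≠ v`;
(3) `d(v,u) ≥ 2`;
(4) some shortest path from `v` to `u` uses the edge `(v,v₁)`;
(5) some shortest path from `v` to `u'` does not use the edge `(u,u')`. -/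
def IsCriticalPair (st : V → Finset V) (H : Set V) (v u v₁ v₂ u' : V) : Prop :=
  IsBiconnectedComponent (graph st) H ∧
  v ∈ H ∧ v₁ ∈ H ∧ v₂ ∈ H ∧ v₁ ≠ v₂ ∧
  v₁ ∈ st v ∧ v₂ ∈ st v ∧
  ¬ (graph st).IsBridge s(v, v₁) ∧ ¬ (graph st).IsBridge s(v, v₂) ∧
  u ∈ H ∧ u ≠ v ∧ u' ∈ H ∧ u' ≠ v ∧ u' ∈ st u ∧
  2 ≤ (graph st).dist v u ∧
  (∃ p : (graph st).Walk v u, p.IsPath ∧ p.length = (graph st).dist v u ∧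
    s(v, v₁) ∈ p.edges) ∧
  (∃ p : (graph st).Walk v u', p.IsPath ∧ p.length = (graph st).dist v u' ∧
    s(u, u') ∉ p.edges)

/-- A critical pair is strong if moreover some shortest path from `u` to `v₂`
does not use the edge `(v,v₂)`. -/
def IsStrongCriticalPair (st : V → Finset V) (H : Set V) (v u v₁ v₂ u' : V) : Prop :=
  IsCriticalPair st H v u v₁ v₂ u' ∧
  ∃ p : (graph st).Walk u v₂, p.IsPath ∧ p.length = (graph st).dist u v₂ ∧
    s(v, v₂) ∉ p.edges

/-- A cycle `c` in `G` is a min cycle if for every two vertices on the cycle, their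
distance along the cycle equals their distance in `G`. -/
def IsMinCycle (G : SimpleGraph V) {a : V} (c : G.Walk a a) : Prop :=
  c.IsCycle ∧ ∀ (x : V) (hx : x ∈ c.toSubgraph.verts) (y : V) (hy : y ∈ c.toSubgraph.verts),
    c.toSubgraph.coe.dist ⟨x, hx⟩ ⟨y, hy⟩ = G.dist x y

/-- A cycle `c` of the network induced by `st` is directed if, traversed in one of the
two possible directions, every edge of the cycle is bought by its tail vertex. -/
def IsDirectedCycle (st : V → Finset V) {a : V} (c : (graph st).Walk a a) : Prop :=
  c.IsCycle ∧
    ((∀ i < c.length, c.getVert (i + 1) ∈ st (c.getVert i)) ∨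
     (∀ i < c.length, c.getVert i ∈ st (c.getVert (i + 1))))

/-- `c` is a centroid of (the subgraph of `G` induced on) `S`: every connected component
obtained from `S` by removing `c` contains at most `|S|/2` vertices. -/
def IsCentroidOn (G : SimpleGraph V) (S : Set V) (c : V) : Prop :=
  c ∈ S ∧ ∀ x ∈ S, x ≠ c →
    2 * {y | y ∈ S ∧ ∃ p : G.Walk x y, c ∉ p.support ∧ ∀ z ∈ p.support, z ∈ S}.ncard
      ≤ S.ncard

end NCG


/-!
If agent `u` buys the edge `uv` and `G - uv` still joins `u` to `v` by a walk of length `L`, then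
dropping the edge saves `α` and lengthens `d(u, x)` by at most `L - 1`, and only for vertices `x`
all of whose shortest paths from `u` start with `uv`; such an `x` satisfies `d(v, x) < d(z, x)` for
every other neighbour `z` of `u`. Stability therefore gives `α ≤ (L - 1) · #{x | d(v, x) < d(z, x)}`.

On a 4-cycle `u v w z` each edge has a detour of length 3, so `α ≤ 2 · #{x | d(v, x) < d(z, x)}`
whenever `u` buys `uv`. However the edges are bought, the cycle can be labelled so that `u` buys
`uv` and `u` or `w` buys the edge to `z`; this bounds `α` by twice both `#{x | d(v, x) < d(z, x)}`
and `#{x | d(z, x) < d(v, x)}`. These sets are disjoint and miss `u` and `w`, so `α ≤ n - 2`.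
-/

open Finset

lemma card_filter_lt_add_card_filter_lt_add_two_le {V β : Type*} [Fintype V] [DecidableEq V]
    [LinearOrder β] (f g : V → β) {a c : V} (hac : a ≠ c) (ha : f a = g a) (hc : f c = g c) :
    #{x | f x < g x} + #{x | g x < f x} + 2 ≤ Fintype.card V := by
  set A : Finset V := {x | f x < g x}
  set B : Finset V := {x | g x < f x}
  have hlt : Disjoint A B := disjoint_filter.2 fun _ _ h h' => lt_asymm h h'
  have heq : Disjoint (A ∪ B) {a, c} := by
    refine Finset.disjoint_left.2 fun x hx hx' => ?_
    simp only [A, B, mem_union, mem_filter, mem_univ, true_and, mem_insert, mem_singleton] at hx hx'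
    rcases hx' with rfl | rfl <;> simp_all
  calc _ = #(A ∪ B ∪ {a, c}) := by
        rw [card_union_of_disjoint heq, card_union_of_disjoint hlt, card_pair hac]
    _ ≤ Fintype.card V := card_le_univ _

namespace SimpleGraph

variable {V : Type*} {G : SimpleGraph V} {u v x y z : V}

lemma Walk.IsPath.exists_walk_of_mem_edges {p : G.Walk u x} (hp : p.IsPath)
    (he : s(u, v) ∈ p.edges) : ∃ q : G.Walk v x, s(u, v) ∉ q.edges ∧ q.length + 1 = p.length := by
  cases p with
  | nil => simp at he
  | cons h q =>
    rw [Walk.cons_isPath_iff] at hp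
    have hq : s(u, v) ∉ q.edges := fun h => hp.2 (q.fst_mem_support_of_mem_edges h)
    rw [Walk.edges_cons, List.mem_cons] at he
    obtain rfl := Sym2.congr_right.mp (he.resolve_right hq)
    exact ⟨q, hq, rfl⟩

lemma dist_deleteEdges_add_one_le (hG : G.Connected) (huv : u ≠ v)
    (W : (G.deleteEdges {s(u, v)}).Walk u v) (x : V) :
    (G.deleteEdges {s(u, v)}).dist u x + 1 ≤ G.dist u x + W.length := by
  obtain ⟨p, hp, hpx⟩ := hG.exists_path_of_dist u x
  by_cases he : s(u, v) ∈ p.edges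
  · obtain ⟨q, hq, hqp⟩ := hp.exists_walk_of_mem_edges he
    have := dist_le (W.append (q.toDeleteEdge _ hq))
    simp only [Walk.length_append, Walk.length_transfer] at this
    omega
  · have := dist_le (p.toDeleteEdge _ he)
    have hW : W.length ≠ 0 := fun h => huv (W.eq_of_length_eq_zero h)
    simp only [Walk.length_transfer] at this
    omega

lemma dist_deleteEdges_le_of_adj (hG : G.Connected) (huy : G.Adj u y) (hyv : y ≠ v)
    (hyx : G.dist y x < G.dist u x) : (G.deleteEdges {s(u, v)}).dist u x ≤ G.dist y x + 1 := by
  classical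
  obtain ⟨p, -, hpx⟩ := hG.exists_path_of_dist y x
  have hu : u ∉ p.support := fun hu => by
    have := dist_le (p.dropUntil u hu)
    have := p.length_dropUntil_le_length hu
    omega
  have he : s(u, v) ∉ (Walk.cons huy p).edges := by
    rw [Walk.edges_cons, List.mem_cons, not_or]
    exact ⟨fun h => hyv (Sym2.congr_right.mp h).symm,
      fun h => hu (p.fst_mem_support_of_mem_edges h)⟩
  have := dist_le ((Walk.cons huy p).toDeleteEdge _ he)
  rwa [Walk.length_transfer, Walk.length_cons, hpx] at this

lemma dist_lt_dist_of_dist_lt_dist_deleteEdges (hG : G.Connected) (huz : G.Adj u z)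
    (hzv : z ≠ v) (hx : G.dist u x < (G.deleteEdges {s(u, v)}).dist u x) :
    G.dist v x < G.dist z x := by
  obtain ⟨p, hp, hpx⟩ := hG.exists_path_of_dist u x
  have he : s(u, v) ∈ p.edges := by
    by_contra he
    have := dist_le (p.toDeleteEdge _ he)
    simp only [Walk.length_transfer] at this
    omega
  obtain ⟨q, -, hqp⟩ := hp.exists_walk_of_mem_edges he
  have hvx := dist_le q
  have hzx : G.dist u x ≤ G.dist z x := by
    by_contra! h
    have := dist_deleteEdges_le_of_adj hG huz hzv h
    omega
  omega

lemma sum_dist_deleteEdges_sub_dist_le [Fintype V] (hG : G.Connected) (huv : u ≠ v)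
    (W : (G.deleteEdges {s(u, v)}).Walk u v) (huz : G.Adj u z) (hzv : z ≠ v) :
    ∑ x, (((G.deleteEdges {s(u, v)}).dist u x : ℝ) - G.dist u x) ≤
      (W.length - 1) * #{x | G.dist v x < G.dist z x} := by
  have hD : (G.deleteEdges {s(u, v)}).Connected :=
    hG.connected_delete_edge_of_not_isBridge fun hb => hb ⟨W⟩
  rw [mul_comm, ← nsmul_eq_mul, ← sum_const, sum_filter]
  refine sum_le_sum fun x _ => ?_
  have hmono : G.dist u x ≤ (G.deleteEdges {s(u, v)}).dist u x :=
    (hD.preconnected u x).dist_anti (deleteEdges_le _)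
  split_ifs with hvz
  · have : ((G.deleteEdges {s(u, v)}).dist u x : ℝ) + 1 ≤ G.dist u x + W.length := by
      exact_mod_cast dist_deleteEdges_add_one_le hG huv W x
    linarith
  · have : (G.deleteEdges {s(u, v)}).dist u x = G.dist u x :=
      (not_lt.mp fun h => hvz (dist_lt_dist_of_dist_lt_dist_deleteEdges hG huz hzv h)).antisymm
        hmono
    simp [this]

structure IsFourCycle (G : SimpleGraph V) (a b c d : V) : Prop where
  adj_ab : G.Adj a b
  adj_bc : G.Adj b c
  adj_cd : G.Adj c d
  adj_da : G.Adj d a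
  ne_ac : a ≠ c
  ne_bd : b ≠ d

namespace IsFourCycle

variable {a b c d : V}

lemma rotate (h : G.IsFourCycle a b c d) : G.IsFourCycle b c d a :=
  ⟨h.adj_bc, h.adj_cd, h.adj_da, h.adj_ab, h.ne_bd, h.ne_ac.symm⟩

lemma reverse (h : G.IsFourCycle a b c d) : G.IsFourCycle a d c b :=
  ⟨h.adj_da.symm, h.adj_cd.symm, h.adj_bc.symm, h.adj_ab.symm, h.ne_ac, h.ne_bd.symm⟩

lemma exists_walk_deleteEdges (h : G.IsFourCycle a b c d) :
    ∃ W : (G.deleteEdges {s(a, b)}).Walk a b, W.length = 3 := by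
  let p : G.Walk a b := .cons h.adj_da.symm (.cons h.adj_cd.symm (.cons h.adj_bc.symm .nil))
  refine ⟨p.toDeleteEdge _ ?_, p.length_transfer _⟩
  simp [p, h.adj_ab.ne, h.adj_da.ne', h.ne_ac, h.ne_bd]

lemma card_dist_lt_add_card_dist_lt_add_two_le [Fintype V] [DecidableEq V]
    (h : G.IsFourCycle a b c d) :
    #{x | G.dist b x < G.dist d x} + #{x | G.dist d x < G.dist b x} + 2 ≤ Fintype.card V := by
  refine _root_.card_filter_lt_add_card_filter_lt_add_two_le _ _ h.ne_ac ?_ ?_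
  · rw [dist_eq_one_iff_adj.2 h.adj_ab.symm, dist_eq_one_iff_adj.2 h.adj_da]
  · rw [dist_eq_one_iff_adj.2 h.adj_bc, dist_eq_one_iff_adj.2 h.adj_cd.symm]

end IsFourCycle

lemma Walk.IsCycle.isFourCycle {a : V} {p : G.Walk a a} (hp : p.IsCycle) (h4 : p.length = 4) :
    G.IsFourCycle a (p.getVert 1) (p.getVert 2) (p.getVert 3) := by
  have hadj (i : ℕ) (hi : i < 4) := p.adj_getVert_succ (i := i) (h4 ▸ hi)
  have hlast : p.getVert 4 = a := h4 ▸ p.getVert_length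
  refine ⟨?_, hadj 1 (by norm_num), hadj 2 (by norm_num), ?_, ?_, ?_⟩
  · simpa using hadj 0 (by norm_num)
  · simpa [hlast] using hadj 3 (by norm_num)
  · simpa using hp.getVert_sub_one_ne_getVert_add_one (i := 1) (by omega)
  · exact hp.getVert_sub_one_ne_getVert_add_one (i := 2) (by omega)

end SimpleGraph

namespace NCG

open SimpleGraph

variable {V : Type*} {α : ℝ} {st : V → Finset V} {u v w z : V}

lemma exists_buying_pattern_of_mem {a b c d : V} (hsq : (graph st).IsFourCycle a b c d)
    (hb : b ∈ st a) :
    ∃ u v w z, (graph st).IsFourCycle u v w z ∧ v ∈ st u ∧ (z ∈ st u ∨ z ∈ st w) := by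
  by_cases hd : d ∈ st a
  · exact ⟨a, b, c, d, hsq, hb, Or.inl hd⟩
  have ha : a ∈ st d := hsq.adj_da.2.resolve_right hd
  by_cases hc : c ∈ st d
  · exact ⟨d, c, b, a, hsq.reverse.rotate, hc, Or.inl ha⟩
  have hd' : d ∈ st c := hsq.adj_cd.2.resolve_right hc
  exact ⟨c, d, a, b, hsq.rotate.rotate, hd', Or.inr hb⟩

/-- Either some vertex buys both of its cycle edges, or every vertex buys exactly one and the
cycle is oriented. -/
lemma exists_buying_pattern {a b c d : V} (hsq : (graph st).IsFourCycle a b c d) :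
    ∃ u v w z, (graph st).IsFourCycle u v w z ∧ v ∈ st u ∧ (z ∈ st u ∨ z ∈ st w) :=
  hsq.adj_ab.2.elim (exists_buying_pattern_of_mem hsq)
    (exists_buying_pattern_of_mem hsq.rotate.reverse)

lemma deleteEdges_le_graph_update [DecidableEq V] :
    (graph st).deleteEdges {s(u, v)} ≤ graph (Function.update st u (((st u).erase v).erase u)) := by
  intro x y hxy
  rw [deleteEdges_adj, Set.mem_singleton_iff, Sym2.eq_iff] at hxy
  obtain ⟨⟨hne, hown⟩, hnuv⟩ := hxy
  refine ⟨hne, ?_⟩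
  by_cases hx : x = u <;> by_cases hy : y = u <;> subst_vars <;> simp_all

variable [Fintype V] [DecidableEq V]

lemma Stable.connected [Nonempty V] (h : Stable α st) : (graph st).Connected := by
  by_contra hG
  obtain ⟨u⟩ := ‹Nonempty V›
  set st' := Function.update st u (univ.erase u)
  have hG' : (graph st').Connected := by
    refine (connected_iff_exists_forall_reachable _).2 ⟨u, fun x => ?_⟩
    rcases eq_or_ne u x with rfl | hx
    · rfl
    · exact Adj.reachable ⟨hx, Or.inl (by simp [st', hx.symm])⟩
  have hcost := h u (univ.erase u) (by simp)
  rw [cost, distcost, if_neg hG, EReal.add_top_of_ne_bot (EReal.coe_ne_bot _), top_le_iff,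
    cost, distcost, if_pos hG', ← EReal.coe_add] at hcost
  exact EReal.coe_ne_top _ hcost

lemma Stable.le_sum_dist_deleteEdges_sub (h : Stable α st) (hα : 0 ≤ α) (hv : v ∈ st u)
    (hD : ((graph st).deleteEdges {s(u, v)}).Connected) :
    α ≤ ∑ x, ((((graph st).deleteEdges {s(u, v)}).dist u x : ℝ) - (graph st).dist u x) := by
  -- dropping `u` as well makes the deviation admissible
  set t := ((st u).erase v).erase u
  have hle : (graph st).deleteEdges {s(u, v)} ≤ graph (Function.update st u t) :=
    deleteEdges_le_graph_update
  have hG : (graph st).Connected := hD.mono (deleteEdges_le _)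
  have hG' : (graph (Function.update st u t)).Connected := hD.mono hle
  have hcard : (t.card : ℝ) ≤ (st u).card - 1 := by
    have : t.card ≤ ((st u).erase v).card := card_erase_le
    have := card_erase_add_one hv
    have : (t.card : ℝ) + 1 ≤ (st u).card := by exact_mod_cast (by omega : t.card + 1 ≤ _)
    linarith
  have hdist (x : V) : ((graph (Function.update st u t)).dist u x : ℝ) ≤
      ((graph st).deleteEdges {s(u, v)}).dist u x := by
    exact_mod_cast (hD.preconnected u x).dist_anti hle
  have hcost := h u t (by simp [t])
  rw [cost, distcost, if_pos hG, cost, distcost, if_pos hG', Function.update_self,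
    ← EReal.coe_add, ← EReal.coe_add, EReal.coe_le_coe_iff] at hcost
  rw [sum_sub_distrib]
  linarith [sum_le_sum fun x (_ : x ∈ univ) => hdist x,
    mul_le_mul_of_nonneg_left hcard hα]

lemma Stable.le_mul_card_dist_lt (h : Stable α st) (hα : 0 ≤ α) (hv : v ∈ st u) (huv : u ≠ v)
    (W : ((graph st).deleteEdges {s(u, v)}).Walk u v) (huz : (graph st).Adj u z) (hzv : z ≠ v) :
    α ≤ (W.length - 1) * #{x | (graph st).dist v x < (graph st).dist z x} := by
  have : Nonempty V := ⟨u⟩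
  have hG := h.connected
  exact (h.le_sum_dist_deleteEdges_sub hα hv
    (hG.connected_delete_edge_of_not_isBridge fun hb => hb ⟨W⟩)).trans
    (sum_dist_deleteEdges_sub_dist_le hG huv W huz hzv)

lemma Stable.le_two_mul_card_dist_lt (h : Stable α st) (hα : 0 ≤ α)
    (hsq : (graph st).IsFourCycle u v w z) (hv : v ∈ st u) :
    α ≤ 2 * #{x | (graph st).dist v x < (graph st).dist z x} := by
  obtain ⟨W, hW⟩ := hsq.exists_walk_deleteEdges
  calc α ≤ (W.length - 1) * #{x | (graph st).dist v x < (graph st).dist z x} :=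
        h.le_mul_card_dist_lt hα hv hsq.adj_ab.ne W hsq.adj_da.symm hsq.ne_bd.symm
    _ = 2 * #{x | (graph st).dist v x < (graph st).dist z x} := by rw [hW]; norm_num

lemma Stable.false_of_isFourCycle_of_mem (h : Stable α st) (hα : (Fintype.card V : ℝ) - 2 < α)
    (hsq : (graph st).IsFourCycle u v w z) (hv : v ∈ st u) (hz : z ∈ st u ∨ z ∈ st w) :
    False := by
  have hcard : (#{x | (graph st).dist v x < (graph st).dist z x} : ℝ) +
      #{x | (graph st).dist z x < (graph st).dist v x} + 2 ≤ Fintype.card V := by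
    exact_mod_cast hsq.card_dist_lt_add_card_dist_lt_add_two_le
  have hα0 : 0 ≤ α := by linarith
  have hvz := h.le_two_mul_card_dist_lt hα0 hsq hv
  have hzv : α ≤ 2 * #{x | (graph st).dist z x < (graph st).dist v x} := hz.elim
    (h.le_two_mul_card_dist_lt hα0 hsq.reverse) (h.le_two_mul_card_dist_lt hα0 hsq.rotate.rotate)
  linarith

end NCG

theorem no_cycle_length_four_general {V : Type*} [Fintype V] [DecidableEq V]
    (α : ℝ) (st : V → Finset V)
    (hα : (Fintype.card V : ℝ) - 2 < α)
    (hstable : NCG.Stable α st) :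
    ¬ ∃ (a : V) (c : (NCG.graph st).Walk a a), c.IsCycle ∧ c.length = 4 := by
  rintro ⟨a, c, hc, hlen⟩
  obtain ⟨u, v, w, z, hsq, hv, hz⟩ := NCG.exists_buying_pattern (hc.isFourCycle hlen)
  exact hstable.false_of_isFourCycle_of_mem hα hsq hv hz

/-- For `α > n−2`, no stable network with `n ≥ 4` agents contains a
cycle of length 4. -/
theorem no_cycle_length_four {V : Type*} [Fintype V] [DecidableEq V]
    (α : ℝ) (st : V → Finset V) (hself : ∀ u, u ∉ st u)
    (hn : 4 ≤ Fintype.card V)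
    (hα : (Fintype.card V : ℝ) - 2 < α)
    (hstable : NCG.Stable α st) :
    ¬ ∃ (a : V) (c : (NCG.graph st).Walk a a), c.IsCycle ∧ c.length = 4 :=
  no_cycle_length_four_general α st hα hstable
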